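/- arXiv:math/0504504 — 2 statements merged into one kernel-verified Lean document; each statement's English description precedes it below -/
import Mathlib

section
/- Let k be a positive integer and let m be an odd positive integer. Then the second group cohomology H²(D₂ₖ, ℤ/m) of the dihedral group D₂ₖ of order 2k with coefficients in ℤ/m endowed with the trivial action is the trivial group. -/
/-!
A 2-cocycle `f` with trivial coefficients in `A` defines a central extension `A → E_f → G`, and
`f` is a coboundary as soon as `E_f → G` has a homomorphic section. Let `G = D₂ₙ`, presented as
`⟨s, r | s², rⁿ, (sr)²⟩`, and let doubling be bijective on `A`. Halving the obstruction
`f(g, g) + f(1, 1)` lifts the reflections `sr 0` and `sr 1` to involutions `s̃, t̃` of `E_f`, and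
`ρ = s̃ t̃` lies over `r` with `(s̃ ρ)² = t̃² = 1`. So conjugation by `s̃` inverts `ρ`, hence
inverts `ρⁿ`, which lies over `rⁿ = 1` and is therefore central: `ρⁿ` is an involution inside `A`,
which has no 2-torsion, so `ρⁿ = 1`. Thus `s̃, ρ` satisfy the dihedral relations and define a
section.
-/

universe u

open groupCohomology

section GroupFacts

variable {E : Type*} [Group E] {n : ℕ} {ρ : E}

lemma zpow_eq_zpow_of_intCast_eq (hρ : ρ ^ n = 1) {a b : ℤ} (hab : (a : ZMod n) = b) :
    ρ ^ a = ρ ^ b :=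
  zpow_eq_zpow_iff_modEq.2 <| ((ZMod.intCast_eq_intCast_iff a b n).1 hab).of_dvd <|
    Int.natCast_dvd_natCast.2 (orderOf_dvd_of_pow_eq_one hρ)

variable (ρ) in
def zmodZPowHom (hρ : ρ ^ n = 1) : Multiplicative (ZMod n) →* E where
  toFun i := ρ ^ (i.toAdd.cast : ℤ)
  map_one' := by simp
  map_mul' i j := by
    rw [← zpow_add]
    exact zpow_eq_zpow_of_intCast_eq hρ (by push_cast [ZMod.intCast_zmod_cast]; rfl)

lemma zmodZPowHom_intCast (hρ : ρ ^ n = 1) (a : ℤ) :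
    zmodZPowHom ρ hρ (.ofAdd (a : ZMod n)) = ρ ^ a :=
  zpow_eq_zpow_of_intCast_eq hρ (ZMod.intCast_zmod_cast _)

lemma zpow_mul_eq_mul_zpow_neg {s : E} (hs : s * s = 1) (hsρ : s * ρ * (s * ρ) = 1) (a : ℤ) :
    ρ ^ a * s = s * ρ ^ (-a) := by
  have hconj : s * ρ * s⁻¹ = ρ⁻¹ := by
    rw [inv_eq_of_mul_eq_one_left hs]
    exact eq_inv_of_mul_eq_one_left (by rw [mul_assoc (s * ρ)]; exact hsρ)
  have := map_zpow (MulAut.conj s) ρ (-a)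
  simp only [MulAut.conj_apply, hconj, inv_zpow', neg_neg] at this
  rw [← this, inv_mul_cancel_right]

end GroupFacts

namespace DihedralGroup

variable {n : ℕ} {E : Type*} [Group E]

lemma r_eq_r_one_zpow (i : ZMod n) : r i = r 1 ^ (i.cast : ℤ) := by
  rw [r_one_zpow, ZMod.intCast_zmod_cast]

@[ext]
lemma hom_ext {φ ψ : DihedralGroup n →* E} (hr : φ (r 1) = ψ (r 1))
    (hs : φ (sr 0) = ψ (sr 0)) : φ = ψ := by
  have hr' (i : ZMod n) : φ (r i) = ψ (r i) := by
    rw [r_eq_r_one_zpow, map_zpow, map_zpow, hr]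
  ext (i | i)
  · exact hr' i
  · rw [← zero_add i, ← sr_mul_r, map_mul, map_mul, hs, hr']

def lift (s ρ : E) (hs : s * s = 1) (hρ : ρ ^ n = 1) (hsρ : s * ρ * (s * ρ) = 1) :
    DihedralGroup n →* E where
  toFun
    | r i => zmodZPowHom ρ hρ (.ofAdd i)
    | sr i => s * zmodZPowHom ρ hρ (.ofAdd i)
  map_one' := map_one (zmodZPowHom ρ hρ)
  map_mul' := by
    set φ := zmodZPowHom ρ hρ
    have hcomm (i : ZMod n) : φ (.ofAdd i) * s = s * φ (.ofAdd (-i)) := by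
      rw [← ZMod.intCast_zmod_cast i, ← Int.cast_neg, zmodZPowHom_intCast, zmodZPowHom_intCast]
      exact zpow_mul_eq_mul_zpow_neg hs hsρ _
    rintro (i | i) (j | j) <;> simp only [r_mul_r, r_mul_sr, sr_mul_r, sr_mul_sr]
    · exact map_mul φ (.ofAdd i) (.ofAdd j)
    · rw [← mul_assoc, hcomm, mul_assoc, ← map_mul, sub_eq_neg_add]
      rfl
    · rw [mul_assoc, ← map_mul]
      rfl
    · rw [mul_assoc, ← mul_assoc _ s, hcomm, mul_assoc s, ← mul_assoc s s, hs, one_mul,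
        ← map_mul, sub_eq_neg_add]
      rfl

@[simp]
lemma lift_r_one (s ρ : E) (hs : s * s = 1) (hρ : ρ ^ n = 1) (hsρ : s * ρ * (s * ρ) = 1) :
    lift s ρ hs hρ hsρ (r 1) = ρ := by
  show zmodZPowHom ρ hρ (.ofAdd 1) = ρ
  simpa using zmodZPowHom_intCast hρ 1

@[simp]
lemma lift_sr_zero (s ρ : E) (hs : s * s = 1) (hρ : ρ ^ n = 1) (hsρ : s * ρ * (s * ρ) = 1) :
    lift s ρ hs hρ hsρ (sr 0) = s := by
  show s * zmodZPowHom ρ hρ (.ofAdd 0) = s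
  rw [ofAdd_zero, map_one, mul_one]

end DihedralGroup

section CentralExtension

variable {k G A : Type u} [CommRing k] [Group G] [AddCommGroup A] [Module k A]

lemma cocycles₂_trivial_apply_add (f : cocycles₂ (Rep.trivial k G A)) (g h j : G) :
    f (g * h, j) + f (g, h) = f (h, j) + f (g, h * j) :=
  (mem_cocycles₂_iff f).1 f.2 g h j

lemma cocycles₂_trivial_map_one_snd (f : cocycles₂ (Rep.trivial k G A)) (g : G) :
    f (g, 1) = f (1, 1) :=
  cocycles₂_map_one_snd f g

@[ext]
structure CocycleExtension (f : cocycles₂ (Rep.trivial k G A)) where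
  fiber : A
  base : G

namespace CocycleExtension

variable {f : cocycles₂ (Rep.trivial k G A)}

instance : Mul (CocycleExtension f) :=
  ⟨fun x y => ⟨x.fiber + y.fiber + f (x.base, y.base), x.base * y.base⟩⟩

instance : One (CocycleExtension f) := ⟨⟨-f (1, 1), 1⟩⟩

instance : Inv (CocycleExtension f) :=
  ⟨fun x => ⟨-x.fiber - f (x.base⁻¹, x.base) - f (1, 1), x.base⁻¹⟩⟩

@[simp]
lemma mul_fiber (x y : CocycleExtension f) :
    (x * y).fiber = x.fiber + y.fiber + f (x.base, y.base) := rfl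

@[simp] lemma mul_base (x y : CocycleExtension f) : (x * y).base = x.base * y.base := rfl

@[simp] lemma one_fiber : (1 : CocycleExtension f).fiber = -f (1, 1) := rfl

@[simp] lemma one_base : (1 : CocycleExtension f).base = 1 := rfl

@[simp]
lemma inv_fiber (x : CocycleExtension f) :
    x⁻¹.fiber = -x.fiber - f (x.base⁻¹, x.base) - f (1, 1) := rfl

@[simp] lemma inv_base (x : CocycleExtension f) : x⁻¹.base = x.base⁻¹ := rfl

instance : Group (CocycleExtension f) :=
  Group.ofLeftAxioms
    (fun x y z => by
      ext
      · simp only [mul_fiber, mul_base]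
        linear_combination (norm := abel) cocycles₂_trivial_apply_add f x.base y.base z.base
      · exact mul_assoc ..)
    (fun x => by ext <;> simp [cocycles₂_map_one_fst])
    (fun x => by
      ext <;> simp only [mul_fiber, one_fiber, inv_fiber, mul_base, one_base, inv_base]
      · abel
      · exact inv_mul_cancel _)

def proj (f : cocycles₂ (Rep.trivial k G A)) : CocycleExtension f →* G where
  toFun := base
  map_one' := rfl
  map_mul' _ _ := rfl

@[simp] lemma proj_apply (x : CocycleExtension f) : proj f x = x.base := rfl

lemma commute_of_base_eq_one {x : CocycleExtension f} (hx : x.base = 1)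
    (y : CocycleExtension f) : Commute x y := by
  ext
  · simp only [mul_fiber, hx, cocycles₂_map_one_fst, cocycles₂_trivial_map_one_snd]
    abel
  · simp [hx]

lemma exists_mul_self_eq_one (h2 : Function.Surjective (fun a : A => 2 • a)) {g : G}
    (hg : g * g = 1) : ∃ x : CocycleExtension f, x.base = g ∧ x * x = 1 := by
  obtain ⟨a, ha⟩ := h2 (-f (1, 1) - f (g, g))
  refine ⟨⟨a, g⟩, rfl, ?_⟩
  ext
  · simp only [mul_fiber, one_fiber, ← two_nsmul, ha]
    abel
  · exact hg

lemma eq_one_of_mul_self_eq_one (h2 : Function.Injective (fun a : A => 2 • a))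
    {x : CocycleExtension f} (hx : x.base = 1) (hxx : x * x = 1) : x = 1 := by
  have hfiber := congrArg fiber hxx
  simp only [mul_fiber, one_fiber, hx] at hfiber
  ext
  · refine h2 ?_
    simp only [one_fiber]
    linear_combination (norm := abel) hfiber
  · exact hx

lemma mem_coboundaries₂_of_section (σ : G →* CocycleExtension f) (hσ : ∀ g, (σ g).base = g) :
    ⇑f ∈ coboundaries₂ (Rep.trivial k G A) := by
  refine ⟨fun g => -(σ g).fiber, funext fun ⟨g, h⟩ => ?_⟩
  have hmul := congrArg fiber (map_mul σ g h)
  simp only [mul_fiber, hσ] at hmul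
  show -(σ h).fiber - -(σ (g * h)).fiber + -(σ g).fiber = f (g, h)
  rw [hmul]
  abel

end CocycleExtension

end CentralExtension

lemma subsingleton_H2_of_forall_mem_coboundaries₂ {k G : Type u} [CommRing k] [Group G]
    {M : Rep k G} (h : ∀ f : cocycles₂ M, ⇑f ∈ coboundaries₂ M) :
    Subsingleton (groupCohomology M 2) := by
  have h0 (x : H2 M) : x = 0 :=
    H2_induction_on x fun f => (H2π_eq_zero_iff f).2 (h f)
  exact ⟨fun x y => (h0 x).trans (h0 y).symm⟩

section Dihedral

open DihedralGroup CocycleExtension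

variable {n : ℕ} {k A : Type} [CommRing k] [AddCommGroup A] [Module k A]

lemma mem_coboundaries₂_dihedral (h2 : Function.Bijective (fun a : A => 2 • a))
    (f : cocycles₂ (Rep.trivial k (DihedralGroup n) A)) :
    ⇑f ∈ coboundaries₂ (Rep.trivial k (DihedralGroup n) A) := by
  obtain ⟨s, hs_base, hs⟩ := exists_mul_self_eq_one (f := f) h2.2 (sr_mul_self 0)
  obtain ⟨t, ht_base, ht⟩ := exists_mul_self_eq_one (f := f) h2.2 (sr_mul_self 1)
  set ρ := s * t
  have hsρ : s * ρ * (s * ρ) = 1 := by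
    rwa [show s * ρ = t by rw [← mul_assoc, hs, one_mul]]
  have hρ_base : ρ.base = r 1 := by simp [ρ, hs_base, ht_base, sr_mul_sr]
  have hρn : ρ ^ n = 1 := by
    have hbase : (ρ ^ n).base = 1 := by
      rw [← proj_apply, map_pow, proj_apply, hρ_base, r_one_pow_n]
    refine eq_one_of_mul_self_eq_one h2.1 hbase ?_
    have hinv := zpow_mul_eq_mul_zpow_neg hs hsρ n
    rw [zpow_natCast, (commute_of_base_eq_one hbase s).eq, zpow_neg, zpow_natCast] at hinv
    exact mul_eq_one_iff_eq_inv.2 (mul_left_cancel hinv)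
  set σ := lift s ρ hs hρn hsρ
  have hσ : (proj f).comp σ = MonoidHom.id _ := by
    ext <;> simp [σ, hρ_base, hs_base]
  exact mem_coboundaries₂_of_section σ (DFunLike.congr_fun hσ)

theorem subsingleton_H2_dihedral (h2 : Function.Bijective (fun a : A => 2 • a)) :
    Subsingleton (groupCohomology (Rep.trivial k (DihedralGroup n) A) 2) :=
  subsingleton_H2_of_forall_mem_coboundaries₂ (mem_coboundaries₂_dihedral h2)

end Dihedral

lemma ZMod.two_nsmul_bijective {m : ℕ} (hodd : Odd m) :
    Function.Bijective (fun a : ZMod m => 2 • a) := by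
  obtain ⟨u, hu⟩ := (ZMod.isUnit_iff_coprime 2 m).2 (Nat.coprime_two_left.2 hodd)
  simp only [nsmul_eq_mul]
  rw [← hu]
  exact u.mulLeft_bijective

theorem stmt_3_general (k m : ℕ) (hodd : Odd m) :
    Subsingleton (groupCohomology (Rep.trivial ℤ (DihedralGroup k) (ZMod m)) 2) :=
  subsingleton_H2_dihedral (ZMod.two_nsmul_bijective hodd)

/-- Let `k` be a positive integer and `m` an odd positive integer. Then the
second group cohomology `H²(D₂ₖ, ℤ/m)` of the dihedral group of order `2k` with coefficients
in `ℤ/m` (trivial action) is the trivial group. -/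
theorem stmt_3 (k m : ℕ) (hk : 0 < k) (hm : 0 < m) (hodd : Odd m) :
    Subsingleton (groupCohomology (Rep.trivial ℤ (DihedralGroup k) (ZMod m)) 2) :=
  stmt_3_general k m hodd
end

section
/- Let m₊ be a positive integer with gcd(m₊, 6) = 1, let r be a natural number, and let α : ℤ/3^{r+1} → Aut(ℤ/2 × ℤ/2) be a homomorphism whose image has order 3. Then the group ℤ/m₊ × ((ℤ/2 × ℤ/2) ⋊_α ℤ/3^{r+1}) is isomorphic to a subgroup of SO(5) (indeed of the block subgroup SO(3) × SO(2) of SO(5)). -/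
/-
The group embeds in `O(3) × O(2)`. The Klein four-group `V₄` acts diagonally on `ℝ³` through its
three nontrivial sign characters, and `Aut(V₄)` permutes these characters, so `V₄ ⋊_α ℤ/s` acts
faithfully by signed permutation matrices; the determinant is the sign of the permutation coming
from `ℤ/s`, which is trivial because `s = 3^(r+1)` is odd. On `ℝ²`, `ℤ/m × ℤ/s` acts by rotation
through `(a, c) ↦ exp(2πi a/m) exp(2πi c/s)`, which is injective since `gcd(m, s) = 1`. Together the
two blocks give a faithful representation in `SO(5)`.
-/

/-- The special orthogonal group `SO(n)`: real orthogonal `n × n` matrices of determinant `1`,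
as a subgroup of the real orthogonal group. -/
def SO (n : ℕ) : Subgroup (Matrix.orthogonalGroup (Fin n) ℝ) where
  carrier := {A | Matrix.det (A : Matrix (Fin n) (Fin n) ℝ) = 1}
  one_mem' := by simp
  mul_mem' := by
    intro a b ha hb
    simp only [Set.mem_setOf_eq, Submonoid.coe_mul, Matrix.det_mul] at *
    rw [ha, hb, mul_one]
  inv_mem' := by
    intro a ha
    simp only [Set.mem_setOf_eq] at *
    rw [← Unitary.star_eq_inv, Unitary.coe_star, Matrix.star_eq_conjTranspose,
      Matrix.det_conjTranspose, ha, star_one]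

open Matrix Equiv Function

section OrthogonalGroup

variable {ι κ R : Type*} [Fintype ι] [DecidableEq ι] [Fintype κ] [DecidableEq κ] [CommRing R]

def orthogonalGroupSumHom :
    orthogonalGroup ι R × orthogonalGroup κ R →* orthogonalGroup (ι ⊕ κ) R where
  toFun A := ⟨fromBlocks A.1 0 0 A.2, by
    rw [mem_orthogonalGroup_iff, fromBlocks_transpose, fromBlocks_multiply]
    simp [(mem_orthogonalGroup_iff ι R).mp A.1.2, (mem_orthogonalGroup_iff κ R).mp A.2.2]⟩
  map_one' := Subtype.ext fromBlocks_one
  map_mul' _ _ := Subtype.ext (by simp [fromBlocks_multiply])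

lemma injective_orthogonalGroupSumHom :
    Injective (orthogonalGroupSumHom : orthogonalGroup ι R × orthogonalGroup κ R →* _) := by
  intro A B h
  obtain ⟨h1, -, -, h2⟩ := fromBlocks_inj.mp (congrArg Subtype.val h)
  exact Prod.ext (Subtype.ext h1) (Subtype.ext h2)

lemma det_orthogonalGroupSumHom (A : orthogonalGroup ι R × orthogonalGroup κ R) :
    det (orthogonalGroupSumHom A : Matrix (ι ⊕ κ) (ι ⊕ κ) R) =
      det (A.1 : Matrix ι ι R) * det (A.2 : Matrix κ κ R) :=
  det_fromBlocks_zero₁₂ _ _ _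

def permOrthogonalHom : Perm ι →* orthogonalGroup ι R where
  toFun σ := ⟨permMatrixHom σ, by
    rw [mem_orthogonalGroup_iff, permMatrixHom_apply, transpose_permMatrix, ← permMatrix_mul,
      inv_inv, mul_inv_cancel, permMatrix_one]⟩
  map_one' := Subtype.ext (map_one permMatrixHom)
  map_mul' σ τ := Subtype.ext (map_mul permMatrixHom σ τ)

lemma det_permOrthogonalHom (σ : Perm ι) :
    det (permOrthogonalHom (R := R) σ : Matrix ι ι R) = ((Perm.sign σ : ℤ) : R) := by
  simp [permOrthogonalHom]

def orthogonalGroupReindexHom (e : κ ≃ ι) : orthogonalGroup κ R →* orthogonalGroup ι R where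
  toFun A := ⟨reindexAlgEquiv R R e A, by
    have h := congrArg (reindexAlgEquiv R R e) ((mem_orthogonalGroup_iff κ R).mp A.2)
    rwa [map_mul, map_one, coe_reindexAlgEquiv, ← transpose_reindex, ← mem_orthogonalGroup_iff,
      ← coe_reindexAlgEquiv R R] at h⟩
  map_one' := Subtype.ext (map_one _)
  map_mul' _ _ := Subtype.ext (map_mul _ _ _)

lemma injective_orthogonalGroupReindexHom (e : κ ≃ ι) :
    Injective (orthogonalGroupReindexHom (R := R) e) := fun _ _ h =>
  Subtype.ext ((reindexAlgEquiv R R e).injective (congrArg Subtype.val h))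

lemma det_orthogonalGroupReindexHom (e : κ ≃ ι) (A : orthogonalGroup κ R) :
    det (orthogonalGroupReindexHom e A : Matrix ι ι R) = det (A : Matrix κ κ R) :=
  det_reindex_self e _

variable {G : Type*} [Group G]

def signDiagonalHom (χ : ι → G →* ℤˣ) : G →* orthogonalGroup ι R where
  toFun g := ⟨diagonal fun i => ((χ i g : ℤ) : R), by
    simp_rw [mem_orthogonalGroup_iff, diagonal_transpose, diagonal_mul_diagonal, ← Int.cast_mul,
      ← Units.val_mul, Int.units_mul_self]
    simp⟩
  map_one' := Subtype.ext (by simp)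
  map_mul' _ _ := Subtype.ext (by simp [diagonal_mul_diagonal])

lemma det_signDiagonalHom (χ : ι → G →* ℤˣ) (g : G) :
    det (signDiagonalHom (R := R) χ g : Matrix ι ι R) = (((∏ i, χ i g : ℤˣ) : ℤ) : R) := by
  simp [signDiagonalHom, det_diagonal]

lemma signDiagonalHom_eq_one_iff [CharZero R] {χ : ι → G →* ℤˣ} {g : G} :
    signDiagonalHom (R := R) χ g = 1 ↔ ∀ i, χ i g = 1 := by
  simp [← Subtype.val_inj, signDiagonalHom, ← diagonal_one]

lemma permOrthogonalHom_mul_signDiagonalHom (σ : Perm ι) (χ : ι → G →* ℤˣ) (g : G) :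
    permOrthogonalHom σ * signDiagonalHom χ g =
      signDiagonalHom (R := R) (fun i => χ (σ⁻¹ i)) g * permOrthogonalHom σ := by
  ext i j
  simp only [permOrthogonalHom, signDiagonalHom]
  simp +contextual [PEquiv.toMatrix_apply, apply_ite]

end OrthogonalGroup

lemma exists_subgroup_SO_mulEquiv_of_injective {G κ : Type*} [Group G] [Fintype κ]
    [DecidableEq κ] {n : ℕ} (hκ : Fintype.card κ = n) (ρ : G →* orthogonalGroup κ ℝ)
    (hρ : Injective ρ) (hdet : ∀ g, det (ρ g : Matrix κ κ ℝ) = 1) :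
    ∃ K : Subgroup (SO n), Nonempty (G ≃* K) := by
  let e := Fintype.equivFinOfCardEq hκ
  let ρ' : G →* SO n := ((orthogonalGroupReindexHom e).comp ρ).codRestrict (SO n) fun g =>
    (det_orthogonalGroupReindexHom e (ρ g)).trans (hdet g)
  have hρ' : Injective ρ' := fun _ _ hgh =>
    hρ (injective_orthogonalGroupReindexHom e (congrArg Subtype.val hgh))
  exact ⟨ρ'.range, ⟨MonoidHom.ofInjective hρ'⟩⟩

noncomputable def circleRotation : Circle →* orthogonalGroup (Fin 2) ℝ where
  toFun z := ⟨Algebra.leftMulMatrix Complex.basisOneI (z : ℂ), by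
    have htranspose : (Algebra.leftMulMatrix Complex.basisOneI (z : ℂ))ᵀ =
        Algebra.leftMulMatrix Complex.basisOneI (starRingEnd ℂ z) := by
      simp only [Algebra.leftMulMatrix_complex]
      ext i j; fin_cases i <;> fin_cases j <;> simp
    rw [mem_orthogonalGroup_iff, htranspose, ← map_mul, Complex.mul_conj, Circle.normSq_coe,
      Complex.ofReal_one, map_one]⟩
  map_one' := Subtype.ext (by simp)
  map_mul' _ _ := Subtype.ext (by simp)

lemma injective_circleRotation : Injective circleRotation := fun _ _ h =>
  Circle.ext (Algebra.leftMulMatrix_injective _ (congrArg Subtype.val h))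

lemma det_circleRotation (z : Circle) :
    det (circleRotation z : Matrix (Fin 2) (Fin 2) ℝ) = 1 := by
  simp [circleRotation, ← Algebra.norm_eq_matrix_det, Algebra.norm_complex_apply]

lemma ZMod.eq_zero_of_toCircle_mul_toCircle_eq_one {m n : ℕ} [NeZero m] [NeZero n]
    (hmn : m.Coprime n) {a : ZMod m} {b : ZMod n} (h : toCircle a * toCircle b = 1) :
    a = 0 ∧ b = 0 := by
  have ha : toCircle a ^ m = 1 := by
    rw [← AddChar.map_nsmul_eq_pow, nsmul_eq_mul, ZMod.natCast_self, zero_mul,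
      AddChar.map_zero_eq_one]
  have hb : toCircle b ^ n = 1 := by
    rw [← AddChar.map_nsmul_eq_pow, nsmul_eq_mul, ZMod.natCast_self, zero_mul,
      AddChar.map_zero_eq_one]
  rw [mul_eq_one_iff_eq_inv] at h
  have h1 : toCircle a = 1 := by
    have hb' : toCircle a ^ n = 1 := by rw [h, inv_pow, hb, inv_one]
    simpa [hmn] using pow_gcd_eq_one.mpr ⟨ha, hb'⟩
  refine ⟨injective_toCircle (h1.trans (AddChar.map_zero_eq_one _).symm),
    injective_toCircle ?_⟩
  rw [AddChar.map_zero_eq_one, ← _root_.inv_inj, ← h, h1, inv_one]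

lemma MonoidHom.apply_eq_one_of_odd_card {G : Type*} [Group G] (f : G →* ℤˣ)
    (hG : Odd (Nat.card G)) (g : G) : f g = 1 := by
  have h : f g ^ Nat.card G = 1 := by rw [← map_pow, pow_card_eq_one', map_one]
  rcases Int.units_eq_one_or (f g) with h1 | h1
  · exact h1
  · rw [h1, hG.neg_one_pow] at h
    exact absurd h (by decide)

local notation "V₄" => Multiplicative (ZMod 2) × Multiplicative (ZMod 2)

-- The three nontrivial characters of `V₄`, each indexed by the nontrivial element of its kernel.
def kleinChar (w : {w : V₄ // w ≠ 1}) : V₄ →* ℤˣ where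
  toFun v := if v = 1 ∨ v = w then 1 else -1
  map_one' := by simp
  map_mul' := by revert w; decide

def kleinPerm : MulAut V₄ →* Perm {w : V₄ // w ≠ 1} where
  toFun φ := Perm.subtypePerm φ.toEquiv fun _ => map_ne_one_iff φ φ.injective
  map_one' := rfl
  map_mul' _ _ := rfl

lemma kleinChar_kleinPerm (φ : MulAut V₄) (w : {w : V₄ // w ≠ 1}) (v : V₄) :
    kleinChar (kleinPerm φ w) (φ v) = kleinChar w v := by
  simp [kleinChar, kleinPerm, φ.injective.eq_iff]

lemma eq_one_of_forall_kleinChar_eq_one {v : V₄} (h : ∀ w, kleinChar w v = 1) : v = 1 := by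
  revert v; decide

lemma prod_kleinChar (v : V₄) : ∏ w, kleinChar w v = 1 := by
  revert v; decide

section KleinRep

variable {H R : Type*} [Group H] [CommRing R] (α : H →* MulAut V₄)

def kleinRep : V₄ ⋊[α] H →* orthogonalGroup {w : V₄ // w ≠ 1} R :=
  SemidirectProduct.lift (signDiagonalHom kleinChar) (permOrthogonalHom.comp (kleinPerm.comp α))
    fun h => by
      ext v : 1
      simp only [MonoidHom.comp_apply, MulEquiv.coe_toMonoidHom, MulAut.conj_apply]
      rw [permOrthogonalHom_mul_signDiagonalHom, mul_inv_cancel_right]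
      refine Subtype.ext (congrArg diagonal (funext fun w => ?_))
      rw [← kleinChar_kleinPerm (α h) _ v, Perm.inv_def, apply_symm_apply]

lemma det_kleinRep (x : V₄ ⋊[α] H) :
    det (kleinRep (R := R) α x : Matrix {w : V₄ // w ≠ 1} {w : V₄ // w ≠ 1} R) =
      ((Perm.sign (kleinPerm (α x.right)) : ℤ) : R) := by
  conv_lhs => rw [← SemidirectProduct.inl_left_mul_inr_right x]
  rw [map_mul, Submonoid.coe_mul, det_mul, kleinRep, SemidirectProduct.lift_inl,
    SemidirectProduct.lift_inr, det_signDiagonalHom, prod_kleinChar]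
  simp [det_permOrthogonalHom]

lemma kleinRep_inl_eq_one_iff [CharZero R] {v : V₄} :
    kleinRep (R := R) α (.inl v) = 1 ↔ v = 1 := by
  rw [kleinRep, SemidirectProduct.lift_inl, signDiagonalHom_eq_one_iff]
  exact ⟨eq_one_of_forall_kleinChar_eq_one, fun h w => h ▸ map_one _⟩

end KleinRep

section BlockRep

variable {m s : ℕ} [NeZero m] [NeZero s] (α : Multiplicative (ZMod s) →* MulAut V₄)

noncomputable def blockRep : Multiplicative (ZMod m) × (V₄ ⋊[α] Multiplicative (ZMod s)) →*
    orthogonalGroup ({w : V₄ // w ≠ 1} ⊕ Fin 2) ℝ :=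
  orthogonalGroupSumHom.comp (((kleinRep α).comp (MonoidHom.snd _ _)).prod
    (circleRotation.comp (ZMod.toCircle.toMonoidHom.comp (MonoidHom.fst _ _) *
      ZMod.toCircle.toMonoidHom.comp (SemidirectProduct.rightHom.comp (MonoidHom.snd _ _)))))

lemma det_blockRep (hs : Odd s)
    (g : Multiplicative (ZMod m) × (V₄ ⋊[α] Multiplicative (ZMod s))) :
    det (blockRep α g : Matrix ({w : V₄ // w ≠ 1} ⊕ Fin 2) ({w : V₄ // w ≠ 1} ⊕ Fin 2) ℝ) = 1 := by
  have hsign : Perm.sign (kleinPerm (α g.2.right)) = 1 :=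
    (Perm.sign.comp (kleinPerm.comp α)).apply_eq_one_of_odd_card (by simpa using hs) _
  simp only [blockRep, MonoidHom.comp_apply, MonoidHom.prod_apply, det_orthogonalGroupSumHom,
    det_kleinRep, det_circleRotation]
  simpa using hsign

lemma injective_blockRep (hms : m.Coprime s) : Injective (blockRep (m := m) α) := by
  rw [injective_iff_map_eq_one]
  rintro ⟨a, x⟩ h
  rw [blockRep, MonoidHom.comp_apply, ← map_one orthogonalGroupSumHom,
    injective_orthogonalGroupSumHom.eq_iff, MonoidHom.prod_apply, Prod.mk_eq_one] at h
  obtain ⟨hx, hax⟩ := h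
  rw [MonoidHom.comp_apply, ← map_one circleRotation, injective_circleRotation.eq_iff] at hax
  simp only [MonoidHom.mul_apply, MonoidHom.coe_comp, MonoidHom.coe_fst, Function.comp_apply,
    AddChar.toMonoidHom_apply, SemidirectProduct.rightHom_eq_right, MonoidHom.coe_snd] at hax hx
  obtain ⟨ha, hr⟩ := ZMod.eq_zero_of_toCircle_mul_toCircle_eq_one hms hax
  rw [toAdd_eq_zero] at ha hr
  rw [← SemidirectProduct.inl_left_mul_inr_right x, hr, map_one, mul_one,
    kleinRep_inl_eq_one_iff] at hx
  rw [← SemidirectProduct.inl_left_mul_inr_right x, ha, hx, hr, map_one, map_one, mul_one,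
    Prod.mk_one_one]

end BlockRep

theorem stmt_19_general (mp r : ℕ) (hmp : 0 < mp) (hgcd : Nat.gcd mp 6 = 1)
    (α : Multiplicative (ZMod (3 ^ (r + 1))) →*
      MulAut (Multiplicative (ZMod 2) × Multiplicative (ZMod 2))) :
    ∃ K : Subgroup (SO 5),
      Nonempty
        ((Multiplicative (ZMod mp) ×
          ((Multiplicative (ZMod 2) × Multiplicative (ZMod 2)) ⋊[α]
            Multiplicative (ZMod (3 ^ (r + 1))))) ≃* K) := by
  have : NeZero mp := ⟨hmp.ne'⟩
  have hodd : Odd (3 ^ (r + 1)) := Odd.pow (by decide)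
  have hcop : mp.Coprime (3 ^ (r + 1)) :=
    Nat.Coprime.pow_right _ (Nat.Coprime.coprime_dvd_right (by norm_num) hgcd)
  exact exists_subgroup_SO_mulEquiv_of_injective (by simp) (blockRep α)
    (injective_blockRep α hcop) (det_blockRep α hodd)

/-- Let `m₊` be a positive integer with `gcd(m₊, 6) = 1`, let `r` be a
natural number, and let `α : ℤ/3^(r+1) → Aut(ℤ/2 × ℤ/2)` be a homomorphism whose image has
order 3. Then `ℤ/m₊ × ((ℤ/2 × ℤ/2) ⋊_α ℤ/3^(r+1))` is isomorphic to a subgroup of `SO(5)`. -/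
theorem stmt_19 (mp r : ℕ) (hmp : 0 < mp) (hgcd : Nat.gcd mp 6 = 1)
    (α : Multiplicative (ZMod (3 ^ (r + 1))) →*
      MulAut (Multiplicative (ZMod 2) × Multiplicative (ZMod 2)))
    (hα : Nat.card α.range = 3) :
    ∃ K : Subgroup (SO 5),
      Nonempty
        ((Multiplicative (ZMod mp) ×
          ((Multiplicative (ZMod 2) × Multiplicative (ZMod 2)) ⋊[α]
            Multiplicative (ZMod (3 ^ (r + 1))))) ≃* K) :=
  stmt_19_general mp r hmp hgcd α
end
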